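/- The step-indexed logical relation for extended combinatory logic (xCL) is sound for the contextual preorder: for all terms p,q ∈ Λ, if L(p,q) then p ≲ctx q. -/

import Mathlib

namespace XCL

/-- Terms of extended combinatory logic (xCL). -/
inductive Tm : Type
  | S : Tm
  | K : Tm
  | I : Tm
  | S1 (t : Tm) : Tm
  | K1 (t : Tm) : Tm
  | S2 (t s : Tm) : Tm
  | app (t s : Tm) : Tm

/-- Labeled transitions `p —t→ p'` (`LStep p t p'`). -/
inductive LStep : Tm → Tm → Tm → Prop
  | S (t : Tm) : LStep .S t (.S1 t)
  | S1 (p t : Tm) : LStep (.S1 p) t (.S2 p t)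
  | S2 (p q t : Tm) : LStep (.S2 p q) t (.app (.app p t) (.app q t))
  | K (t : Tm) : LStep .K t (.K1 t)
  | K1 (p t : Tm) : LStep (.K1 p) t p
  | I (t : Tm) : LStep .I t t

/-- Unlabeled transitions `p → p'`. -/
inductive Step : Tm → Tm → Prop
  | appL {p p' : Tm} (q : Tm) : Step p p' → Step (.app p q) (.app p' q)
  | beta {p q p' : Tm} : LStep p q p' → Step (.app p q) p'

/-- `p ⇒ p'`: reflexive-transitive closure of `→`. -/
def Steps : Tm → Tm → Prop := Relation.ReflTransGen Step

/-- `p ⇒^t p'`: weak labeled transition. -/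
def WLStep (p t p' : Tm) : Prop := ∃ p'', Steps p p'' ∧ LStep p'' t p'

/-- `p` terminates: it admits no unlabeled transition. -/
def Terminates (p : Tm) : Prop := ∀ p', ¬ Step p p'

/-- `p ⇓ p'`. -/
def BigStep (p p' : Tm) : Prop := Steps p p' ∧ Terminates p'

/-- `p⇓`: `p` eventually terminates. -/
def Conv (p : Tm) : Prop := ∃ p', BigStep p p'

/-- Applicative simulations. -/
def IsAppSim (R : Tm → Tm → Prop) : Prop :=
  ∀ p q, R p q →
    (∀ p', Step p p' → ∃ q', Steps q q' ∧ R p' q') ∧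
    (∀ t p', LStep p t p' → ∃ q', WLStep q t q' ∧ R p' q')

/-- Applicative similarity `≲app`: the union of all applicative simulations. -/
def AppSim (p q : Tm) : Prop := ∃ R, IsAppSim R ∧ R p q

/-- One-hole contexts `C[·]`. -/
inductive Ctx : Type
  | hole : Ctx
  | S1 (c : Ctx) : Ctx
  | K1 (c : Ctx) : Ctx
  | S2L (c : Ctx) (s : Tm) : Ctx
  | S2R (t : Tm) (c : Ctx) : Ctx
  | appL (c : Ctx) (s : Tm) : Ctx
  | appR (t : Tm) (c : Ctx) : Ctx

/-- `C[p]`: plugging a term into the hole of a context. -/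
def plug : Ctx → Tm → Tm
  | .hole, p => p
  | .S1 c, p => .S1 (plug c p)
  | .K1 c, p => .K1 (plug c p)
  | .S2L c s, p => .S2 (plug c p) s
  | .S2R t c, p => .S2 t (plug c p)
  | .appL c s, p => .app (plug c p) s
  | .appR t c, p => .app t (plug c p)

/-- The contextual preorder `≲ctx`. -/
def CtxLe (p q : Tm) : Prop := ∀ C : Ctx, Conv (plug C p) → Conv (plug C q)

/-- Congruences: relations compatible with all xCL operators. -/
def IsCong (R : Tm → Tm → Prop) : Prop :=
  R .S .S ∧ R .K .K ∧ R .I .I ∧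
  (∀ p q, R p q → R (.S1 p) (.S1 q)) ∧
  (∀ p q, R p q → R (.K1 p) (.K1 q)) ∧
  (∀ p q p' q', R p q → R p' q' → R (.S2 p p') (.S2 q q')) ∧
  (∀ p q p' q', R p q → R p' q' → R (.app p p') (.app q q'))

/-- Adequacy for termination. -/
def Adequate (R : Tm → Tm → Prop) : Prop := ∀ p q, R p q → Conv p → Conv q

/-- The step-indexed approximations `Lⁿ`. -/
def LrelN : ℕ → Tm → Tm → Prop
  | 0, _, _ => True
  | n+1, p, q => LrelN n p q ∧
      (∀ p', Step p p' → ∃ q', Steps q q' ∧ LrelN n p' q') ∧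
      (Terminates p → ∃ qb, BigStep q qb ∧
        ∀ d e p' q', LrelN n d e → LStep p d p' → LStep qb e q' → LrelN n p' q')

/-- The step-indexed logical relation `L = ⋂ₙ Lⁿ`. -/
def LRel (p q : Tm) : Prop := ∀ n, LrelN n p q

end XCL

/-!
Each approximation `Lⁿ` is a congruence, by induction on `n`: for an application `p p'`, a
β-step `p p' → r` is matched by running `q` to the value `q̄` given by clause (ii) and firing
`q̄ —q'→`. Congruences are reflexive and preserved by plugging into contexts, so `L` relates
`C[p]` to `C[q]`. Finally `L` is adequate: clause (i) transports `L(p, q)` along the reduction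
of `p` to a value, where clause (ii) makes `q` converge.
-/

namespace XCL

theorem Step.exists_app {p p' : Tm} (h : Step p p') : ∃ a b, p = .app a b := by
  cases h <;> exact ⟨_, _, rfl⟩

theorem Step.exists_of_app (p q : Tm) : ∃ r, Step (.app p q) r := by
  induction p generalizing q with
  | S => exact ⟨_, .beta (.S q)⟩
  | K => exact ⟨_, .beta (.K q)⟩
  | I => exact ⟨_, .beta (.I q)⟩
  | S1 t _ => exact ⟨_, .beta (.S1 t q)⟩
  | K1 t _ => exact ⟨_, .beta (.K1 t q)⟩
  | S2 t s _ _ => exact ⟨_, .beta (.S2 t s q)⟩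
  | app a b iha _ =>
    obtain ⟨r, hr⟩ := iha b
    exact ⟨_, .appL q hr⟩

theorem terminates_iff {p : Tm} : Terminates p ↔ ∀ a b, p ≠ .app a b := by
  constructor
  · rintro hp a b rfl
    obtain ⟨r, hr⟩ := Step.exists_of_app a b
    exact hp r hr
  · intro hp p' hs
    obtain ⟨a, b, rfl⟩ := hs.exists_app
    exact hp a b rfl

theorem Terminates.exists_lStep {p : Tm} (hp : Terminates p) (t : Tm) : ∃ p', LStep p t p' := by
  cases p with
  | S => exact ⟨_, .S t⟩
  | K => exact ⟨_, .K t⟩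
  | I => exact ⟨_, .I t⟩
  | S1 a => exact ⟨_, .S1 a t⟩
  | K1 a => exact ⟨_, .K1 a t⟩
  | S2 a b => exact ⟨_, .S2 a b t⟩
  | app a b => exact absurd rfl (terminates_iff.mp hp a b)

theorem LStep.terminates {p t p' : Tm} (h : LStep p t p') : Terminates p :=
  terminates_iff.mpr fun _ _ hp => by subst hp; cases h

theorem steps_appL {p p' : Tm} (q : Tm) (h : Steps p p') : Steps (.app p q) (.app p' q) :=
  Relation.ReflTransGen.lift (Tm.app · q) (fun _ _ => Step.appL q) _ _ h

theorem IsCong.refl {R : Tm → Tm → Prop} (hR : IsCong R) (p : Tm) : R p p := by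
  obtain ⟨hS, hK, hI, hS1, hK1, hS2, happ⟩ := hR
  induction p with
  | S => exact hS
  | K => exact hK
  | I => exact hI
  | S1 _ ih => exact hS1 _ _ ih
  | K1 _ ih => exact hK1 _ _ ih
  | S2 _ _ ih ih' => exact hS2 _ _ _ _ ih ih'
  | app _ _ ih ih' => exact happ _ _ _ _ ih ih'

theorem IsCong.plug {R : Tm → Tm → Prop} (hR : IsCong R) (C : Ctx) {p q : Tm} (h : R p q) :
    R (plug C p) (plug C q) := by
  have hrefl := hR.refl
  obtain ⟨-, -, -, hS1, hK1, hS2, happ⟩ := hR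
  induction C with
  | hole => exact h
  | S1 _ ih => exact hS1 _ _ ih
  | K1 _ ih => exact hK1 _ _ ih
  | S2L _ s ih => exact hS2 _ _ _ _ ih (hrefl s)
  | S2R t _ ih => exact hS2 _ _ _ _ (hrefl t) ih
  | appL _ s ih => exact happ _ _ _ _ ih (hrefl s)
  | appR t _ ih => exact happ _ _ _ _ (hrefl t) ih

theorem lrelN_of_steps_right : ∀ (n : ℕ) {p q q' : Tm}, Steps q q' → LrelN n p q' → LrelN n p q
  | 0, _, _, _, _, _ => trivial
  | n + 1, _, _, _, hq, ⟨h, hstep, hval⟩ =>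
    ⟨lrelN_of_steps_right n hq h,
     fun p' hp => (hstep p' hp).imp fun _ ⟨hq', h'⟩ => ⟨hq.trans hq', h'⟩,
     fun hp => (hval hp).imp fun _ ⟨⟨hq', hqb⟩, h'⟩ => ⟨⟨hq.trans hq', hqb⟩, h'⟩⟩

theorem lrelN_succ_of_terminates {n : ℕ} {p q : Tm} (h : LrelN n p q)
    (hl : ∀ d e p' q', LrelN n d e → LStep p d p' → LStep q e q' → LrelN n p' q')
    (hp : Terminates p := by simp [terminates_iff])
    (hq : Terminates q := by simp [terminates_iff]) :
    LrelN (n + 1) p q :=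
  ⟨h, fun _ hs => absurd hs (hp _), fun _ => ⟨q, ⟨.refl, hq⟩, hl⟩⟩

theorem lrelN_app_succ {n : ℕ}
    (happ : ∀ p q p' q', LrelN n p q → LrelN n p' q' → LrelN n (.app p p') (.app q q'))
    {p q p' q' : Tm} (h : LrelN (n + 1) p q) (h' : LrelN (n + 1) p' q') :
    LrelN (n + 1) (.app p p') (.app q q') := by
  refine ⟨happ _ _ _ _ h.1 h'.1, fun r hs => ?_, fun ht => absurd rfl (terminates_iff.mp ht p p')⟩
  cases hs with
  | appL _ hp =>
    obtain ⟨q₁, hq, h₁⟩ := h.2.1 _ hp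
    exact ⟨.app q₁ q', steps_appL q' hq, happ _ _ _ _ h₁ h'.1⟩
  | beta hp =>
    obtain ⟨qb, ⟨hq, hqb⟩, hl⟩ := h.2.2 hp.terminates
    obtain ⟨r', hr'⟩ := hqb.exists_lStep q'
    exact ⟨r', (steps_appL q' hq).tail (.beta hr'), hl _ _ _ _ h'.1 hp hr'⟩

theorem isCong_lrelN_succ {n : ℕ} (hR : IsCong (LrelN n)) : IsCong (LrelN (n + 1)) := by
  obtain ⟨hS, hK, hI, hS1, hK1, hS2, happ⟩ := hR
  refine ⟨?_, ?_, ?_, ?_, ?_, ?_, fun _ _ _ _ => lrelN_app_succ happ⟩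
  · refine lrelN_succ_of_terminates hS ?_
    rintro d e _ _ hde ⟨⟩ ⟨⟩
    exact hS1 d e hde
  · refine lrelN_succ_of_terminates hK ?_
    rintro d e _ _ hde ⟨⟩ ⟨⟩
    exact hK1 d e hde
  · refine lrelN_succ_of_terminates hI ?_
    rintro _ _ _ _ hde ⟨⟩ ⟨⟩
    exact hde
  · intro p q h
    refine lrelN_succ_of_terminates (hS1 p q h.1) ?_
    rintro d e _ _ hde ⟨⟩ ⟨⟩
    exact hS2 _ _ _ _ h.1 hde
  · intro p q h
    refine lrelN_succ_of_terminates (hK1 p q h.1) ?_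
    rintro _ _ _ _ _ ⟨⟩ ⟨⟩
    exact h.1
  · intro p q p' q' h h'
    refine lrelN_succ_of_terminates (hS2 _ _ _ _ h.1 h'.1) ?_
    rintro d e _ _ hde ⟨⟩ ⟨⟩
    exact happ _ _ _ _ (happ _ _ _ _ h.1 hde) (happ _ _ _ _ h'.1 hde)

theorem isCong_lrelN : ∀ n, IsCong (LrelN n)
  | 0 => ⟨trivial, trivial, trivial, fun _ _ _ => trivial, fun _ _ _ => trivial,
      fun _ _ _ _ _ _ => trivial, fun _ _ _ _ _ _ => trivial⟩
  | n + 1 => isCong_lrelN_succ (isCong_lrelN n)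

theorem LRel.plug (C : Ctx) {p q : Tm} (h : LRel p q) : LRel (plug C p) (plug C q) :=
  fun n => (isCong_lrelN n).plug C (h n)

theorem LRel.of_step {p q p' : Tm} (h : LRel p q) (hp : Step p p') : LRel p' q := fun n =>
  let ⟨_, hq, h'⟩ := (h (n + 1)).2.1 p' hp
  lrelN_of_steps_right n hq h'

theorem adequate_lRel : Adequate LRel := by
  rintro p q h ⟨pb, hp, hpb⟩
  induction hp using Relation.ReflTransGen.head_induction_on with
  | refl =>
    obtain ⟨qb, hq, -⟩ := (h 1).2.2 hpb
    exact ⟨qb, hq⟩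
  | head hs _ ih => exact ih (h.of_step hs)

end XCL

open XCL in
/-- The step-indexed logical relation for xCL is sound for the contextual preorder. -/
theorem logRel_sound : ∀ p q : Tm, LRel p q → CtxLe p q :=
  fun _ _ h C => adequate_lRel _ _ (h.plug C)
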